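/- arXiv:1809.00606 — 5 statements merged into one kernel-verified Lean document; each statement's English description precedes it below -/
import Mathlib

section
/- Let (U, Δ, 𝒟) be a covering decision information system with Δ = (𝒞₁, …, 𝒞ₘ), let 𝒞ₘ⁺ be a refinement of 𝒞ₘ and Δ⁺ = (𝒞₁, …, 𝒞ₘ₋₁, 𝒞ₘ⁺). Assume ⋃𝒜_{𝒞ₘ} ⊆ ⋃𝒜_{𝒞ₘ⁺}. Then for every x ∈ POS_{∪Δ⁺}(𝒟) \ POS_{∪Δ}(𝒟), the updated related set is r⁺(x) = {m}. (Claim established in the proof of Theorem 3.6.) -/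
open Set

/-- A covering of `U`: a family of nonempty subsets whose union is all of `U`. -/
def IsCovering {U : Type*} (𝒞 : Set (Set U)) : Prop :=
  (∀ C ∈ 𝒞, C.Nonempty) ∧ ⋃₀ 𝒞 = Set.univ

/-- A partition of `U`: a covering whose blocks are pairwise disjoint. -/
def IsPartitionC {U : Type*} (𝒟 : Set (Set U)) : Prop :=
  IsCovering 𝒟 ∧ ∀ D₁ ∈ 𝒟, ∀ D₂ ∈ 𝒟, D₁ ≠ D₂ → Disjoint D₁ D₂

/-- `𝒜_𝒞 = {C ∈ 𝒞 : ∃ D ∈ 𝒟, C ⊆ D}`: blocks of `𝒞` contained in some decision class. -/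
def goodBlocks {U : Type*} (𝒟 𝒞 : Set (Set U)) : Set (Set U) :=
  {C ∈ 𝒞 | ∃ D ∈ 𝒟, C ⊆ D}

/-- The related set `r(x)` of `x`: indices `i` such that some block of `𝒞ᵢ` contains `x`
and is contained in some decision class. -/
def relSet {U : Type*} {m : ℕ} (Δ : Fin m → Set (Set U)) (𝒟 : Set (Set U)) (x : U) :
    Set (Fin m) :=
  {i | ∃ C ∈ Δ i, x ∈ C ∧ ∃ D ∈ 𝒟, C ⊆ D}

/-- The positive region `POS_{∪Δ}(𝒟) = ⋃_{D ∈ 𝒟} ⋃ {K : K a block of some 𝒞ᵢ, K ⊆ D}`. -/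
def POS {U : Type*} {m : ℕ} (Δ : Fin m → Set (Set U)) (𝒟 : Set (Set U)) : Set U :=
  ⋃ D ∈ 𝒟, ⋃₀ {K | (∃ i, K ∈ Δ i) ∧ K ⊆ D}

/-- `𝒞'` refines `𝒞` (and `𝒞` coarsens `𝒞'`): every block of `𝒞'` is inside a block of `𝒞`. -/
def Refines {U : Type*} (𝒞' 𝒞 : Set (Set U)) : Prop :=
  ∀ C ∈ 𝒞', ∃ C₀ ∈ 𝒞, C ⊆ C₀

/-- `P` is a reduct of `(U, Δ, 𝒟)`: `P` meets `r(x)` for every `x` in the positive region,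
and no proper subset of `P` has this property. -/
def IsReduct {U : Type*} {m : ℕ} (Δ : Fin m → Set (Set U)) (𝒟 : Set (Set U))
    (P : Set (Fin m)) : Prop :=
  (∀ x ∈ POS Δ 𝒟, (P ∩ relSet Δ 𝒟 x).Nonempty) ∧
  ∀ Q : Set (Fin m), Q ⊂ P → ¬ (∀ x ∈ POS Δ 𝒟, (Q ∩ relSet Δ 𝒟 x).Nonempty)

theorem mem_POS_iff_relSet_nonempty {U : Type*} {m : ℕ} (Δ : Fin m → Set (Set U))
    (𝒟 : Set (Set U)) (x : U) : x ∈ POS Δ 𝒟 ↔ (relSet Δ 𝒟 x).Nonempty := by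
  simp only [POS, relSet, mem_iUnion, mem_sUnion, mem_ofPred_eq, exists_prop]
  constructor
  · rintro ⟨D, hD, K, ⟨⟨i, hK⟩, hKD⟩, hxK⟩
    exact ⟨i, K, hK, hxK, D, hD, hKD⟩
  · rintro ⟨i, K, hK, hxK, D, hD, hKD⟩
    exact ⟨D, hD, K, ⟨⟨i, hK⟩, hKD⟩, hxK⟩

theorem relSet_update_subset {U : Type*} {m : ℕ} (Δ : Fin m → Set (Set U))
    (𝒟 : Set (Set U)) (j : Fin m) (𝒞 : Set (Set U)) (x : U) :
    relSet (Function.update Δ j 𝒞) 𝒟 x ⊆ insert j (relSet Δ 𝒟 x) := by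
  intro i hi
  rcases eq_or_ne i j with rfl | hij
  · exact mem_insert i _
  · rw [relSet, mem_ofPred_eq, Function.update_of_ne hij] at hi
    exact mem_insert_of_mem j hi

theorem relSet_update_eq_singleton {U : Type*} {m : ℕ} (Δ : Fin m → Set (Set U))
    (𝒟 : Set (Set U)) (j : Fin m) (𝒞 : Set (Set U)) (x : U)
    (hx : x ∈ POS (Function.update Δ j 𝒞) 𝒟 \ POS Δ 𝒟) :
    relSet (Function.update Δ j 𝒞) 𝒟 x = {j} := by
  obtain ⟨hx_new, hx_old⟩ := hx
  rw [mem_POS_iff_relSet_nonempty] at hx_new hx_old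
  rw [not_nonempty_iff_eq_empty] at hx_old
  refine hx_new.subset_singleton_iff.1 ?_
  simpa only [hx_old, insert_empty_eq] using relSet_update_subset Δ 𝒟 j 𝒞 x

theorem stmt5_general {U : Type*} {m : ℕ}
    (Δ : Fin (m + 1) → Set (Set U)) (𝒟 : Set (Set U))
    (Cp : Set (Set U))
    (Δp : Fin (m + 1) → Set (Set U))
    (hΔp : Δp = Function.update Δ (Fin.last m) Cp)
    (x : U) (hx : x ∈ POS Δp 𝒟 \ POS Δ 𝒟) :
    relSet Δp 𝒟 x = {Fin.last m} := by
  subst hΔp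
  exact relSet_update_eq_singleton Δ 𝒟 (Fin.last m) Cp x hx

/-- assuming `⋃𝒜_{𝒞ₘ} ⊆ ⋃𝒜_{𝒞ₘ⁺}`, for every
`x ∈ POS_{∪Δ⁺}(𝒟) \ POS_{∪Δ}(𝒟)` one has `r⁺(x) = {m}`. -/
theorem stmt5 {U : Type*} [Finite U] [Nonempty U] {m : ℕ}
    (Δ : Fin (m + 1) → Set (Set U)) (𝒟 : Set (Set U))
    (hΔ : ∀ i, IsCovering (Δ i)) (h𝒟 : IsPartitionC 𝒟)
    (Cp : Set (Set U)) (hCp : IsCovering Cp)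
    (href : Refines Cp (Δ (Fin.last m)))
    (Δp : Fin (m + 1) → Set (Set U))
    (hΔp : Δp = Function.update Δ (Fin.last m) Cp)
    (hmono : ⋃₀ goodBlocks 𝒟 (Δ (Fin.last m)) ⊆ ⋃₀ goodBlocks 𝒟 Cp)
    (x : U) (hx : x ∈ POS Δp 𝒟 \ POS Δ 𝒟) :
    relSet Δp 𝒟 x = {Fin.last m} :=
  stmt5_general Δ 𝒟 Cp Δp hΔp x hx
end

section
/- Let (U, Δ, 𝒟) be a covering decision information system with Δ = (𝒞₁, …, 𝒞ₘ), let 𝒞ₘ⁺ be a refinement of 𝒞ₘ and Δ⁺ = (𝒞₁, …, 𝒞ₘ₋₁, 𝒞ₘ⁺). Assume ⋃𝒜_{𝒞ₘ} ⊆ ⋃𝒜_{𝒞ₘ⁺} and POS_{∪Δ⁺}(𝒟) ≠ POS_{∪Δ}(𝒟). Then every reduct P of (U, Δ⁺, 𝒟) contains the index m (i.e., contains 𝒞ₘ⁺). (Claim 𝓡₁(U,Δ⁺,𝒟) = ∅ in the proof of Theorem 3.6.) -/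
open Set

/- Replacing `𝒞ₘ` by a covering whose good blocks cover at least as much can only enlarge the
positive region, so `POS_{∪Δ⁺}(𝒟) ≠ POS_{∪Δ}(𝒟)` yields some `x ∈ POS_{∪Δ⁺}(𝒟) \ POS_{∪Δ}(𝒟)`.
Since `x` is covered by no good block of `𝒞₁, …, 𝒞ₘ₋₁`, its related set `r⁺(x)` is `{m}`, and every
reduct of `(U, Δ⁺, 𝒟)` must meet it. -/

section PositiveRegion

variable {U : Type*} {m : ℕ} (Δ : Fin m → Set (Set U)) (𝒟 : Set (Set U))

theorem mem_relSet_iff {x : U} {i : Fin m} :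
    i ∈ relSet Δ 𝒟 x ↔ x ∈ ⋃₀ goodBlocks 𝒟 (Δ i) := by
  simp only [relSet, goodBlocks, mem_ofPred_eq, mem_sUnion]
  constructor
  · rintro ⟨C, hC, hxC, hgood⟩
    exact ⟨C, ⟨hC, hgood⟩, hxC⟩
  · rintro ⟨C, ⟨hC, hgood⟩, hxC⟩
    exact ⟨C, hC, hxC, hgood⟩

theorem mem_POS_iff {x : U} : x ∈ POS Δ 𝒟 ↔ ∃ i, x ∈ ⋃₀ goodBlocks 𝒟 (Δ i) := by
  simp only [POS, goodBlocks, mem_iUnion, mem_sUnion, mem_ofPred_eq]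
  constructor
  · rintro ⟨D, hD, K, ⟨⟨i, hK⟩, hKD⟩, hxK⟩
    exact ⟨i, K, ⟨hK, D, hD, hKD⟩, hxK⟩
  · rintro ⟨i, K, ⟨hK, D, hD, hKD⟩, hxK⟩
    exact ⟨D, hD, K, ⟨⟨i, hK⟩, hKD⟩, hxK⟩

variable {Δ 𝒟}

theorem POS_subset_POS_update {j : Fin m} {C : Set (Set U)}
    (hgood : ⋃₀ goodBlocks 𝒟 (Δ j) ⊆ ⋃₀ goodBlocks 𝒟 C) :
    POS Δ 𝒟 ⊆ POS (Function.update Δ j C) 𝒟 := by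
  intro x hx
  obtain ⟨i, hxi⟩ := (mem_POS_iff Δ 𝒟).1 hx
  refine (mem_POS_iff _ 𝒟).2 ⟨i, ?_⟩
  rcases eq_or_ne i j with rfl | hij
  · simpa using hgood hxi
  · simpa [Function.update_of_ne hij] using hxi

theorem relSet_update_subset_of_notMem_POS {j : Fin m} {C : Set (Set U)} {x : U}
    (hx : x ∉ POS Δ 𝒟) : relSet (Function.update Δ j C) 𝒟 x ⊆ {j} := by
  intro i hi
  by_contra hij
  rw [mem_relSet_iff, Function.update_of_ne hij] at hi
  exact hx ((mem_POS_iff Δ 𝒟).2 ⟨i, hi⟩)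

end PositiveRegion

theorem stmt6_general {U : Type*} {m : ℕ}
    (Δ : Fin (m + 1) → Set (Set U)) (𝒟 : Set (Set U))
    (Cp : Set (Set U))
    (Δp : Fin (m + 1) → Set (Set U))
    (hΔp : Δp = Function.update Δ (Fin.last m) Cp)
    (hmono : ⋃₀ goodBlocks 𝒟 (Δ (Fin.last m)) ⊆ ⋃₀ goodBlocks 𝒟 Cp)
    (hne : POS Δp 𝒟 ≠ POS Δ 𝒟) :
    ∀ P : Set (Fin (m + 1)), IsReduct Δp 𝒟 P → Fin.last m ∈ P := by
  subst hΔp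
  intro P hP
  obtain ⟨x, hxp, hxn⟩ : (POS (Function.update Δ (Fin.last m) Cp) 𝒟 \ POS Δ 𝒟).Nonempty :=
    sdiff_nonempty.2 fun h => hne (h.antisymm (POS_subset_POS_update hmono))
  obtain ⟨i, hiP, hi⟩ := hP.1 x hxp
  rwa [relSet_update_subset_of_notMem_POS hxn hi] at hiP

/-- assuming `⋃𝒜_{𝒞ₘ} ⊆ ⋃𝒜_{𝒞ₘ⁺}` and `POS_{∪Δ⁺}(𝒟) ≠ POS_{∪Δ}(𝒟)`,
every reduct of `(U, Δ⁺, 𝒟)` contains the index `m`. -/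
theorem stmt6 {U : Type*} [Finite U] [Nonempty U] {m : ℕ}
    (Δ : Fin (m + 1) → Set (Set U)) (𝒟 : Set (Set U))
    (hΔ : ∀ i, IsCovering (Δ i)) (h𝒟 : IsPartitionC 𝒟)
    (Cp : Set (Set U)) (hCp : IsCovering Cp)
    (href : Refines Cp (Δ (Fin.last m)))
    (Δp : Fin (m + 1) → Set (Set U))
    (hΔp : Δp = Function.update Δ (Fin.last m) Cp)
    (hmono : ⋃₀ goodBlocks 𝒟 (Δ (Fin.last m)) ⊆ ⋃₀ goodBlocks 𝒟 Cp)
    (hne : POS Δp 𝒟 ≠ POS Δ 𝒟) :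
    ∀ P : Set (Fin (m + 1)), IsReduct Δp 𝒟 P → Fin.last m ∈ P :=
  stmt6_general Δ 𝒟 Cp Δp hΔp hmono hne
end

section
/- Let (U, Δ, 𝒟) be a covering decision information system with Δ = (𝒞₁, …, 𝒞ₘ), let 𝒞ₘ⁺ be a refinement of 𝒞ₘ and Δ⁺ = (𝒞₁, …, 𝒞ₘ₋₁, 𝒞ₘ⁺). Assume ⋃𝒜_{𝒞ₘ} ⊆ ⋃𝒜_{𝒞ₘ⁺} and POS_{∪Δ⁺}(𝒟) = POS_{∪Δ}(𝒟). Then for every P ⊆ {1,…,m} with m ∉ P: P is a reduct of (U, Δ⁺, 𝒟) if and only if P is a reduct of (U, Δ, 𝒟). (The ◊𝓡 part of Theorem 3.5.) -/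
open Set

section Reduct

variable {U : Type*} {m : ℕ} {Δ Δ' : Fin m → Set (Set U)} {𝒟 : Set (Set U)}

theorem inter_relSet_eq_of_eqOn {Q : Set (Fin m)} (hQ : EqOn Δ Δ' Q) (x : U) :
    Q ∩ relSet Δ 𝒟 x = Q ∩ relSet Δ' 𝒟 x := by
  ext i
  simp only [mem_inter_iff, relSet, mem_ofPred_eq]
  exact and_congr_right fun hi => by rw [hQ hi]

theorem forall_pos_inter_relSet_nonempty_congr (hpos : POS Δ 𝒟 = POS Δ' 𝒟)
    {Q : Set (Fin m)} (hQ : EqOn Δ Δ' Q) :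
    (∀ x ∈ POS Δ 𝒟, (Q ∩ relSet Δ 𝒟 x).Nonempty) ↔
      ∀ x ∈ POS Δ' 𝒟, (Q ∩ relSet Δ' 𝒟 x).Nonempty := by
  simp only [hpos, inter_relSet_eq_of_eqOn hQ]

theorem isReduct_congr (hpos : POS Δ 𝒟 = POS Δ' 𝒟) {P : Set (Fin m)} (hP : EqOn Δ Δ' P) :
    IsReduct Δ 𝒟 P ↔ IsReduct Δ' 𝒟 P := by
  unfold IsReduct
  rw [forall_pos_inter_relSet_nonempty_congr hpos hP]
  exact and_congr_right fun _ => forall₂_congr fun Q hQ => by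
    rw [forall_pos_inter_relSet_nonempty_congr hpos (hP.mono hQ.subset)]

end Reduct

theorem stmt7_general {U : Type*} {m : ℕ}
    (Δ : Fin (m + 1) → Set (Set U)) (𝒟 : Set (Set U))
    (Cp : Set (Set U))
    (Δp : Fin (m + 1) → Set (Set U))
    (hΔp : Δp = Function.update Δ (Fin.last m) Cp)
    (hpos : POS Δp 𝒟 = POS Δ 𝒟) :
    ∀ P : Set (Fin (m + 1)), Fin.last m ∉ P →
      (IsReduct Δp 𝒟 P ↔ IsReduct Δ 𝒟 P) := by
  intro P hP
  refine isReduct_congr hpos fun i hi => ?_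
  rw [hΔp, Function.update_of_ne (ne_of_mem_of_not_mem hi hP)]

/-- the ◊𝓡 part of Theorem 3.5: assuming `⋃𝒜_{𝒞ₘ} ⊆ ⋃𝒜_{𝒞ₘ⁺}` and
`POS_{∪Δ⁺}(𝒟) = POS_{∪Δ}(𝒟)`, for `P` with `m ∉ P`: `P` is a reduct of `(U, Δ⁺, 𝒟)`
iff `P` is a reduct of `(U, Δ, 𝒟)`. -/
theorem stmt7 {U : Type*} [Finite U] [Nonempty U] {m : ℕ}
    (Δ : Fin (m + 1) → Set (Set U)) (𝒟 : Set (Set U))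
    (hΔ : ∀ i, IsCovering (Δ i)) (h𝒟 : IsPartitionC 𝒟)
    (Cp : Set (Set U)) (hCp : IsCovering Cp)
    (href : Refines Cp (Δ (Fin.last m)))
    (Δp : Fin (m + 1) → Set (Set U))
    (hΔp : Δp = Function.update Δ (Fin.last m) Cp)
    (hmono : ⋃₀ goodBlocks 𝒟 (Δ (Fin.last m)) ⊆ ⋃₀ goodBlocks 𝒟 Cp)
    (hpos : POS Δp 𝒟 = POS Δ 𝒟) :
    ∀ P : Set (Fin (m + 1)), Fin.last m ∉ P →
      (IsReduct Δp 𝒟 P ↔ IsReduct Δ 𝒟 P) :=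
  stmt7_general Δ 𝒟 Cp Δp hΔp hpos
end

section
/- Let (U, Δ, 𝒟) be a covering decision information system with Δ = (𝒞₁, …, 𝒞ₘ), let 𝒞ₘ⁺ be a refinement of 𝒞ₘ and Δ⁺ = (𝒞₁, …, 𝒞ₘ₋₁, 𝒞ₘ⁺). Assume ⋃𝒜_{𝒞ₘ} ⊆ ⋃𝒜_{𝒞ₘ⁺} and POS_{∪Δ⁺}(𝒟) = POS_{∪Δ}(𝒟). Then for every P ⊆ {1,…,m} with m ∈ P: P is a reduct of (U, Δ⁺, 𝒟) if and only if (i) P is minimal among the sets Q ⊆ {1,…,m} with m ∈ Q such that Q ∩ r(x) ≠ ∅ for every x ∈ POS_{∪Δ}(𝒟) \ ⋃𝒜_{𝒞ₘ⁺}, and (ii) no reduct of (U, Δ, 𝒟) is a proper subset of P. (The ▲𝓡 part of Theorem 3.5.) -/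
open Set

def Discerns {U : Type*} {m : ℕ} (Δ : Fin m → Set (Set U)) (𝒟 : Set (Set U)) (S : Set U)
    (Q : Set (Fin m)) : Prop :=
  ∀ x ∈ S, (Q ∩ relSet Δ 𝒟 x).Nonempty

lemma Discerns.mono_right {U : Type*} {m : ℕ} {Δ Δ' : Fin m → Set (Set U)} {𝒟 : Set (Set U)}
    {S : Set U} {Q : Set (Fin m)} (h : ∀ x, relSet Δ 𝒟 x ⊆ relSet Δ' 𝒟 x)
    (hQ : Discerns Δ 𝒟 S Q) : Discerns Δ' 𝒟 S Q := fun x hx =>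
  (hQ x hx).mono (inter_subset_inter_right _ (h x))

lemma exists_isReduct_subset {U : Type*} {m : ℕ} (Δ : Fin m → Set (Set U))
    (𝒟 : Set (Set U)) {Q : Set (Fin m)} (hQ : Discerns Δ 𝒟 (POS Δ 𝒟) Q) :
    ∃ Q' ⊆ Q, IsReduct Δ 𝒟 Q' := by
  induction Q using WellFoundedLT.induction with
  | ind Q ih =>
    by_cases hmin : ∀ R, R ⊂ Q → ¬ Discerns Δ 𝒟 (POS Δ 𝒟) R
    · exact ⟨Q, subset_rfl, hQ, hmin⟩
    · push Not at hmin
      obtain ⟨R, hRQ, hR⟩ := hmin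
      obtain ⟨Q', hQ'R, hQ'⟩ := ih R hRQ hR
      exact ⟨Q', hQ'R.trans hRQ.subset, hQ'⟩

section Update

variable {U : Type*} {m : ℕ} {Δ : Fin m → Set (Set U)} {𝒟 : Set (Set U)} {k : Fin m}
  {C' : Set (Set U)} {x : U}

lemma mem_relSet_update_self_iff :
    k ∈ relSet (Function.update Δ k C') 𝒟 x ↔ x ∈ ⋃₀ goodBlocks 𝒟 C' := by
  simp only [relSet, goodBlocks, mem_ofPred_eq, Function.update_self, mem_sUnion]
  tauto

lemma mem_relSet_update_of_ne {i : Fin m} (hi : i ≠ k) :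
    i ∈ relSet (Function.update Δ k C') 𝒟 x ↔ i ∈ relSet Δ 𝒟 x := by
  simp only [relSet, mem_ofPred_eq, Function.update_of_ne hi]

lemma relSet_subset_relSet_update (hmono : ⋃₀ goodBlocks 𝒟 (Δ k) ⊆ ⋃₀ goodBlocks 𝒟 C') :
    relSet Δ 𝒟 x ⊆ relSet (Function.update Δ k C') 𝒟 x := by
  intro i hi
  obtain rfl | hik := eq_or_ne i k
  · obtain ⟨C, hC, hxC, hCD⟩ := hi
    exact mem_relSet_update_self_iff.2 (hmono ⟨C, ⟨hC, hCD⟩, hxC⟩)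
  · exact (mem_relSet_update_of_ne hik).2 hi

lemma discerns_update_iff_of_notMem {S : Set U} {Q : Set (Fin m)} (hk : k ∉ Q) :
    Discerns (Function.update Δ k C') 𝒟 S Q ↔ Discerns Δ 𝒟 S Q := by
  have hQ : ∀ x, Q ∩ relSet (Function.update Δ k C') 𝒟 x = Q ∩ relSet Δ 𝒟 x := fun x => by
    ext i
    exact and_congr_right fun hi => mem_relSet_update_of_ne (ne_of_mem_of_not_mem hi hk)
  simp only [Discerns, hQ]

/-- Once `k ∈ Q`, the points covered by good blocks of `C'` are discerned by `k` alone, and on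
the remaining points the related sets before and after the update agree away from `k`. -/
lemma discerns_update_iff_of_mem (hmono : ⋃₀ goodBlocks 𝒟 (Δ k) ⊆ ⋃₀ goodBlocks 𝒟 C')
    {S : Set U} {Q : Set (Fin m)} (hk : k ∈ Q) :
    Discerns (Function.update Δ k C') 𝒟 S Q ↔
      Discerns Δ 𝒟 (S \ ⋃₀ goodBlocks 𝒟 C') Q := by
  constructor
  · rintro hQ x ⟨hxS, hxG⟩
    obtain ⟨i, hiQ, hix⟩ := hQ x hxS
    have hik : i ≠ k := by
      rintro rfl
      exact hxG (mem_relSet_update_self_iff.1 hix)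
    exact ⟨i, hiQ, (mem_relSet_update_of_ne hik).1 hix⟩
  · intro hQ x hxS
    by_cases hxG : x ∈ ⋃₀ goodBlocks 𝒟 C'
    · exact ⟨k, hk, mem_relSet_update_self_iff.2 hxG⟩
    · exact (hQ x ⟨hxS, hxG⟩).mono
        (inter_subset_inter_right _ (relSet_subset_relSet_update hmono))

/-- A proper subset `Q ⊂ P` discerning the updated positive region either contains `k`, against
the minimality of `P`, or avoids `k`; then `Q` discerns the original positive region and so
contains a reduct of the original system. -/
theorem isReduct_update_iff (hmono : ⋃₀ goodBlocks 𝒟 (Δ k) ⊆ ⋃₀ goodBlocks 𝒟 C')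
    (hpos : POS (Function.update Δ k C') 𝒟 = POS Δ 𝒟) {P : Set (Fin m)} (hk : k ∈ P) :
    IsReduct (Function.update Δ k C') 𝒟 P ↔
      Discerns Δ 𝒟 (POS Δ 𝒟 \ ⋃₀ goodBlocks 𝒟 C') P ∧
        (∀ Q, Q ⊂ P → ¬ (k ∈ Q ∧ Discerns Δ 𝒟 (POS Δ 𝒟 \ ⋃₀ goodBlocks 𝒟 C') Q)) ∧
        ∀ Q, IsReduct Δ 𝒟 Q → ¬ Q ⊂ P := by
  unfold IsReduct
  rw [hpos]
  constructor
  · rintro ⟨hdisc, hmin⟩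
    refine ⟨(discerns_update_iff_of_mem hmono hk).1 hdisc, ?_, ?_⟩
    · rintro Q hQP ⟨hkQ, hQ⟩
      exact hmin Q hQP ((discerns_update_iff_of_mem hmono hkQ).2 hQ)
    · rintro Q ⟨hQ, -⟩ hQP
      exact hmin Q hQP (Discerns.mono_right (fun _ => relSet_subset_relSet_update hmono) hQ)
  · rintro ⟨hdisc, hmin, hred⟩
    refine ⟨(discerns_update_iff_of_mem hmono hk).2 hdisc, fun Q hQP hQ => ?_⟩
    by_cases hkQ : k ∈ Q
    · exact hmin Q hQP ⟨hkQ, (discerns_update_iff_of_mem hmono hkQ).1 hQ⟩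
    · obtain ⟨Q', hQ'Q, hQ'⟩ :=
        exists_isReduct_subset Δ 𝒟 ((discerns_update_iff_of_notMem hkQ).1 hQ)
      exact hred Q' hQ' (hQ'Q.trans_ssubset hQP)

end Update

theorem stmt8_general {U : Type*} {m : ℕ}
    (Δ : Fin (m + 1) → Set (Set U)) (𝒟 : Set (Set U))
    (Cp : Set (Set U))
    (Δp : Fin (m + 1) → Set (Set U))
    (hΔp : Δp = Function.update Δ (Fin.last m) Cp)
    (hmono : ⋃₀ goodBlocks 𝒟 (Δ (Fin.last m)) ⊆ ⋃₀ goodBlocks 𝒟 Cp)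
    (hpos : POS Δp 𝒟 = POS Δ 𝒟) :
    ∀ P : Set (Fin (m + 1)), Fin.last m ∈ P →
      (IsReduct Δp 𝒟 P ↔
        ((∀ x ∈ POS Δ 𝒟 \ ⋃₀ goodBlocks 𝒟 Cp, (P ∩ relSet Δ 𝒟 x).Nonempty) ∧
          (∀ Q : Set (Fin (m + 1)), Q ⊂ P →
            ¬ (Fin.last m ∈ Q ∧
                ∀ x ∈ POS Δ 𝒟 \ ⋃₀ goodBlocks 𝒟 Cp, (Q ∩ relSet Δ 𝒟 x).Nonempty)) ∧
          (∀ Q : Set (Fin (m + 1)), IsReduct Δ 𝒟 Q → ¬ Q ⊂ P))) := by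
  subst hΔp
  intro P hP
  exact isReduct_update_iff hmono hpos hP

/-- the ▲𝓡 part of Theorem 3.5: assuming `⋃𝒜_{𝒞ₘ} ⊆ ⋃𝒜_{𝒞ₘ⁺}` and
`POS_{∪Δ⁺}(𝒟) = POS_{∪Δ}(𝒟)`, for `P` with `m ∈ P`: `P` is a reduct of `(U, Δ⁺, 𝒟)` iff
(i) `P` is minimal among `m`-containing sets `Q` with `Q ∩ r(x) ≠ ∅` for every
`x ∈ POS_{∪Δ}(𝒟) \ ⋃𝒜_{𝒞ₘ⁺}`, and (ii) no reduct of `(U, Δ, 𝒟)` is a proper subset of `P`. -/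
theorem stmt8 {U : Type*} [Finite U] [Nonempty U] {m : ℕ}
    (Δ : Fin (m + 1) → Set (Set U)) (𝒟 : Set (Set U))
    (hΔ : ∀ i, IsCovering (Δ i)) (h𝒟 : IsPartitionC 𝒟)
    (Cp : Set (Set U)) (hCp : IsCovering Cp)
    (href : Refines Cp (Δ (Fin.last m)))
    (Δp : Fin (m + 1) → Set (Set U))
    (hΔp : Δp = Function.update Δ (Fin.last m) Cp)
    (hmono : ⋃₀ goodBlocks 𝒟 (Δ (Fin.last m)) ⊆ ⋃₀ goodBlocks 𝒟 Cp)
    (hpos : POS Δp 𝒟 = POS Δ 𝒟) :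
    ∀ P : Set (Fin (m + 1)), Fin.last m ∈ P →
      (IsReduct Δp 𝒟 P ↔
        ((∀ x ∈ POS Δ 𝒟 \ ⋃₀ goodBlocks 𝒟 Cp, (P ∩ relSet Δ 𝒟 x).Nonempty) ∧
          (∀ Q : Set (Fin (m + 1)), Q ⊂ P →
            ¬ (Fin.last m ∈ Q ∧
                ∀ x ∈ POS Δ 𝒟 \ ⋃₀ goodBlocks 𝒟 Cp, (Q ∩ relSet Δ 𝒟 x).Nonempty)) ∧
          (∀ Q : Set (Fin (m + 1)), IsReduct Δ 𝒟 Q → ¬ Q ⊂ P))) :=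
  stmt8_general Δ 𝒟 Cp Δp hΔp hmono hpos
end

section
/- Theorem 4.4 (updating reducts when coarsening preserves the positive region): Let (U, Δ, 𝒟) be a covering decision information system with Δ = (𝒞₁, …, 𝒞ₘ), let 𝒞ₘ⁻ be a coarsening of 𝒞ₘ and Δ⁻ = (𝒞₁, …, 𝒞ₘ₋₁, 𝒞ₘ⁻). Assume POS_{∪Δ⁻}(𝒟) = POS_{∪Δ}(𝒟). Then 𝓡(U,Δ⁻,𝒟) = ◊𝓡(U,Δ,𝒟) ∪ ▲𝓡, where ◊𝓡(U,Δ,𝒟) = {P ∈ 𝓡(U,Δ,𝒟) : m ∉ P} and ▲𝓡 is the set of all P ⊆ {1,…,m} such that m ∈ P, P is minimal among m-containing sets intersecting r⁻(x) for every x ∈ POS_{∪Δ}(𝒟) \ ⋃𝒜_{𝒞ₘ⁻}, and no member of 𝓡(U,Δ,𝒟) avoiding m is a proper subset of P. -/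
open Set

/-!
Replacing `𝒞ₘ` by `𝒞ₘ⁻` changes the related sets only in the index `m`, and `m ∈ r⁻(x)` holds
exactly when `x ∈ ⋃𝒜_{𝒞ₘ⁻}`. Hence a set avoiding `m` meets every `r⁻(x)`, `x ∈ POS`, iff it
meets every `r(x)`, while a set containing `m` meets every `r⁻(x)` iff it meets those with
`x ∉ ⋃𝒜_{𝒞ₘ⁻}`. So the reducts of `Δ⁻` avoiding `m` are those of `Δ`, and one containing `m` is
minimal among such `m`-containing sets and contains no `m`-free set meeting every `r(x)`; as the
index set is finite, every such `m`-free set contains an `m`-free reduct of `Δ`.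
-/

section Minimal

variable {α : Type*} {p q : Set α → Prop} {j : α}

lemma minimal_iff_minimal_of_notMem (hpq : ∀ Q, j ∉ Q → (p Q ↔ q Q)) {P : Set α} (hP : j ∉ P) :
    Minimal p P ↔ Minimal q P := by
  have hsub : ∀ Q, Q ⊂ P → j ∉ Q := fun Q hQ hj ↦ hP (hQ.subset hj)
  simp only [minimal_iff_forall_ssubset, hpq P hP]
  exact and_congr_right fun _ ↦ forall₂_congr fun Q hQ ↦ not_congr (hpq Q (hsub Q hQ))

lemma minimal_iff_of_mem [Finite α] (hpq : ∀ Q, j ∉ Q → (p Q ↔ q Q)) {P : Set α} (hP : j ∈ P) :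
    Minimal p P ↔
      Minimal (fun Q ↦ j ∈ Q ∧ p Q) P ∧ ∀ Q, Minimal q Q → j ∉ Q → ¬ Q ⊂ P := by
  constructor
  · intro h
    refine ⟨h.and_left hP, fun Q hQ hjQ hQP ↦ ?_⟩
    exact (minimal_iff_forall_ssubset.mp h).2 hQP ((hpq Q hjQ).mpr hQ.prop)
  · rintro ⟨hmin, hfree⟩
    refine minimal_iff_forall_ssubset.mpr ⟨hmin.prop.2, fun Q hQP hQ ↦ ?_⟩
    by_cases hjQ : j ∈ Q
    · exact (minimal_iff_forall_ssubset.mp hmin).2 hQP ⟨hjQ, hQ⟩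
    · obtain ⟨Q', hQ'Q, hQ'⟩ := exists_minimal_le_of_wellFoundedLT q Q ((hpq Q hjQ).mp hQ)
      exact hfree Q' hQ' (fun hj ↦ hjQ (hQ'Q hj)) (hQ'Q.trans_ssubset hQP)

lemma setOf_minimal_eq_union [Finite α] (hpq : ∀ Q, j ∉ Q → (p Q ↔ q Q)) :
    {P | Minimal p P} =
      {P | Minimal q P ∧ j ∉ P} ∪
        {P | Minimal (fun Q ↦ j ∈ Q ∧ p Q) P ∧ ∀ Q, Minimal q Q → j ∉ Q → ¬ Q ⊂ P} := by
  ext P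
  by_cases hP : j ∈ P
  · simp [hP, minimal_iff_of_mem hpq hP]
  · have hnot : ¬ Minimal (fun Q ↦ j ∈ Q ∧ p Q) P := fun h ↦ hP h.prop.1
    simp [hP, hnot, minimal_iff_minimal_of_notMem hpq hP]

end Minimal

section RelSet

variable {U : Type*} {m : ℕ} (Δ : Fin m → Set (Set U)) (𝒟 : Set (Set U))

lemma isReduct_iff_minimal (P : Set (Fin m)) :
    IsReduct Δ 𝒟 P ↔
      Minimal (fun Q ↦ ∀ x ∈ POS Δ 𝒟, (Q ∩ relSet Δ 𝒟 x).Nonempty) P := by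
  rw [minimal_iff_forall_ssubset, IsReduct]

lemma mem_relSet_iff_mem_sUnion_goodBlocks (i : Fin m) (x : U) :
    i ∈ relSet Δ 𝒟 x ↔ x ∈ ⋃₀ goodBlocks 𝒟 (Δ i) := by
  simp only [relSet, goodBlocks, mem_ofPred_eq, mem_sUnion]
  exact ⟨fun ⟨C, hC, hx, hD⟩ ↦ ⟨C, ⟨hC, hD⟩, hx⟩, fun ⟨C, ⟨hC, hD⟩, hx⟩ ↦ ⟨C, hC, hx, hD⟩⟩

lemma inter_relSet_update_nonempty_iff {j : Fin m} {Q : Set (Fin m)} (hj : j ∉ Q)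
    (𝒞 : Set (Set U)) (x : U) :
    (Q ∩ relSet (Function.update Δ j 𝒞) 𝒟 x).Nonempty ↔ (Q ∩ relSet Δ 𝒟 x).Nonempty := by
  have hne : ∀ i ∈ Q, Function.update Δ j 𝒞 i = Δ i :=
    fun i hi ↦ Function.update_of_ne (ne_of_mem_of_not_mem hi hj) _ _
  simp only [Set.Nonempty, mem_inter_iff, mem_relSet_iff_mem_sUnion_goodBlocks]
  exact exists_congr fun i ↦ and_congr_right fun hi ↦ by rw [hne i hi]

lemma forall_inter_relSet_nonempty_iff_of_mem {j : Fin m} {Q : Set (Fin m)} (hj : j ∈ Q)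
    (S : Set U) :
    (∀ x ∈ S, (Q ∩ relSet Δ 𝒟 x).Nonempty) ↔
      ∀ x ∈ S \ ⋃₀ goodBlocks 𝒟 (Δ j), (Q ∩ relSet Δ 𝒟 x).Nonempty := by
  refine ⟨fun h x hx ↦ h x hx.1, fun h x hx ↦ ?_⟩
  by_cases hxj : x ∈ ⋃₀ goodBlocks 𝒟 (Δ j)
  · exact ⟨j, hj, (mem_relSet_iff_mem_sUnion_goodBlocks Δ 𝒟 j x).mpr hxj⟩
  · exact h x ⟨hx, hxj⟩

end RelSet

theorem stmt15_general {U : Type*} {m : ℕ}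
    (Δ : Fin (m + 1) → Set (Set U)) (𝒟 : Set (Set U))
    (Cm : Set (Set U))
    (Δm : Fin (m + 1) → Set (Set U))
    (hΔm : Δm = Function.update Δ (Fin.last m) Cm)
    (hpos : POS Δm 𝒟 = POS Δ 𝒟) :
    {P : Set (Fin (m + 1)) | IsReduct Δm 𝒟 P} =
      {P : Set (Fin (m + 1)) | IsReduct Δ 𝒟 P ∧ Fin.last m ∉ P} ∪
      {P : Set (Fin (m + 1)) |
        (Fin.last m ∈ P ∧
          ∀ x ∈ POS Δ 𝒟 \ ⋃₀ goodBlocks 𝒟 Cm, (P ∩ relSet Δm 𝒟 x).Nonempty) ∧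
        (∀ Q : Set (Fin (m + 1)), Q ⊂ P →
          ¬ (Fin.last m ∈ Q ∧
              ∀ x ∈ POS Δ 𝒟 \ ⋃₀ goodBlocks 𝒟 Cm, (Q ∩ relSet Δm 𝒟 x).Nonempty)) ∧
        (∀ Q : Set (Fin (m + 1)), IsReduct Δ 𝒟 Q → Fin.last m ∉ Q → ¬ Q ⊂ P)} := by
  have hCm : Δm (Fin.last m) = Cm := by rw [hΔm, Function.update_self]
  have hfree : ∀ Q, Fin.last m ∉ Q → ((∀ x ∈ POS Δ 𝒟, (Q ∩ relSet Δm 𝒟 x).Nonempty) ↔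
      ∀ x ∈ POS Δ 𝒟, (Q ∩ relSet Δ 𝒟 x).Nonempty) := fun Q hQ ↦
    forall₂_congr fun x _ ↦ hΔm ▸ inter_relSet_update_nonempty_iff Δ 𝒟 hQ Cm x
  have hlast : ∀ Q, (Fin.last m ∈ Q ∧ ∀ x ∈ POS Δ 𝒟, (Q ∩ relSet Δm 𝒟 x).Nonempty) ↔
      (Fin.last m ∈ Q ∧ ∀ x ∈ POS Δ 𝒟 \ ⋃₀ goodBlocks 𝒟 Cm, (Q ∩ relSet Δm 𝒟 x).Nonempty) :=
    fun Q ↦ and_congr_right fun hQ ↦ hCm ▸ forall_inter_relSet_nonempty_iff_of_mem Δm 𝒟 hQ _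
  simp only [isReduct_iff_minimal, hpos, setOf_minimal_eq_union hfree, hlast]
  simp only [minimal_iff_forall_ssubset, and_assoc]

/-- Theorem 4.4: assuming `POS_{∪Δ⁻}(𝒟) = POS_{∪Δ}(𝒟)`,
`𝓡(U,Δ⁻,𝒟) = ◊𝓡(U,Δ,𝒟) ∪ ▲𝓡`, where `◊𝓡(U,Δ,𝒟) = {P ∈ 𝓡(U,Δ,𝒟) : m ∉ P}` and `▲𝓡`
consists of the `P` with `m ∈ P`, minimal among `m`-containing sets intersecting `r⁻(x)`
for every `x ∈ POS_{∪Δ}(𝒟) \ ⋃𝒜_{𝒞ₘ⁻}`, such that no member of `𝓡(U,Δ,𝒟)` avoiding `m`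
is a proper subset of `P`. -/
theorem stmt15 {U : Type*} [Finite U] [Nonempty U] {m : ℕ}
    (Δ : Fin (m + 1) → Set (Set U)) (𝒟 : Set (Set U))
    (hΔ : ∀ i, IsCovering (Δ i)) (h𝒟 : IsPartitionC 𝒟)
    (Cm : Set (Set U)) (hCm : IsCovering Cm)
    (hcoar : Refines (Δ (Fin.last m)) Cm)
    (Δm : Fin (m + 1) → Set (Set U))
    (hΔm : Δm = Function.update Δ (Fin.last m) Cm)
    (hpos : POS Δm 𝒟 = POS Δ 𝒟) :
    {P : Set (Fin (m + 1)) | IsReduct Δm 𝒟 P} =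
      {P : Set (Fin (m + 1)) | IsReduct Δ 𝒟 P ∧ Fin.last m ∉ P} ∪
      {P : Set (Fin (m + 1)) |
        (Fin.last m ∈ P ∧
          ∀ x ∈ POS Δ 𝒟 \ ⋃₀ goodBlocks 𝒟 Cm, (P ∩ relSet Δm 𝒟 x).Nonempty) ∧
        (∀ Q : Set (Fin (m + 1)), Q ⊂ P →
          ¬ (Fin.last m ∈ Q ∧
              ∀ x ∈ POS Δ 𝒟 \ ⋃₀ goodBlocks 𝒟 Cm, (Q ∩ relSet Δm 𝒟 x).Nonempty)) ∧
        (∀ Q : Set (Fin (m + 1)), IsReduct Δ 𝒟 Q → Fin.last m ∉ Q → ¬ Q ⊂ P)} :=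
  stmt15_general Δ 𝒟 Cm Δm hΔm hpos
end
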